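/- Let C be an M(ℕ)-category and let f : x → y be a morphism between finitely supported objects of C. If u and v in M(ℕ) agree on supp(x) ∪ supp(y), then u • x = v • x, u • y = v • y, and u_*(f) = v_*(f) as morphisms from u • x to u • y. -/

import Mathlib

/-!
Supports are closed under intersection, so `supp x` contains a finite support `A` of `x`.
If `u` and `v` agree on `A`, choose a permutation `π` with `π * u` and `π * v` fixing `A`;
then `u • x = v • x`, and since `u_* f = [v,u]^x ≫ v_* f ≫ [u,v]^y` it remains to see that
the comparison isomorphism `[v,u]^x` is an identity. Left multiplication by `π` reduces this
to `[s,1]^x` for `s` fixing `A`, and there the coherence `ι_mul` applied to the conjugate of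
`s` by the doubling map `c : n ↦ 2n` does the work.
-/

open CategoryTheory

/-- The monoid of injective self-maps of `U`, under composition. -/
def Minj (U : Type*) : Submonoid (Function.End U) where
  carrier := {f | Function.Injective f}
  mul_mem' := fun hf hg => hf.comp hg
  one_mem' := Function.injective_id

instance (U : Type*) : FunLike (Minj U) U U where
  coe u := u.1
  coe_injective := fun _ _ h => Subtype.ext h

@[simp] lemma Minj.mul_apply {U : Type*} (u v : Minj U) (a : U) : (u * v) a = u (v a) := rfl

/-- `x` is supported on `A` if every injection fixing `A` elementwise fixes `x`. -/
def Supported {U : Type*} {X : Type*} [MulAction (Minj U) X] (A : Set U) (x : X) : Prop :=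
  ∀ u : Minj U, (∀ a ∈ A, u a = a) → u • x = x

/-- `x` is finitely supported if it is supported on some finite subset of `U`. -/
def FinSupported {U : Type*} {X : Type*} [MulAction (Minj U) X] (x : X) : Prop :=
  ∃ A : Finset U, Supported (A : Set U) x

/-- The support of `x`: the intersection of all finite subsets of `U` on which `x`
is supported. -/
def supp {U : Type*} {X : Type*} [MulAction (Minj U) X] (x : X) : Set U :=
  {i : U | ∀ A : Finset U, Supported (A : Set U) x → i ∈ A}

/-- An `M(U)`-category: a category with an action of the injection monoid on objects,
together with coherent isomorphisms `ι u x : x ≅ u • x`. The action of `u` on morphisms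
is then given by conjugation with these isomorphisms. -/
structure MCat (U : Type*) (C : Type*) [Category C] [MulAction (Minj U) C] where
  ι : ∀ (u : Minj U) (x : C), x ≅ u • x
  ι_mul : ∀ (u v : Minj U) (x : C),
    (ι u x).hom ≫ (ι v (u • x)).hom = (ι (v * u) x).hom ≫ eqToHom (mul_smul v u x)

namespace MCat

variable {U : Type*} {C : Type*} [Category C] [MulAction (Minj U) C]

/-- The action `u_*` of an injection on morphisms: `u_*(f) = ι(u,y) ∘ f ∘ ι(u,x)⁻¹`. -/
def act (h : MCat U C) (u : Minj U) {x y : C} (f : x ⟶ y) : u • x ⟶ u • y :=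
  (h.ι u x).inv ≫ f ≫ (h.ι u y).hom

/-- The natural isomorphism `[v,u]^x := ι(v,x) ∘ ι(u,x)⁻¹ : u • x ⟶ v • x`. -/
def tw (h : MCat U C) (v u : Minj U) (x : C) : u • x ⟶ v • x :=
  (h.ι u x).inv ≫ (h.ι v x).hom

@[simp] lemma act_id (h : MCat U C) (u : Minj U) (x : C) : h.act u (𝟙 x) = 𝟙 (u • x) := by
  simp [act]

@[simp] lemma act_comp (h : MCat U C) (u : Minj U) {x y z : C} (f : x ⟶ y) (g : y ⟶ z) :
    h.act u (f ≫ g) = h.act u f ≫ h.act u g := by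
  simp [act]

lemma ι_natural (h : MCat U C) (u : Minj U) {x y : C} (f : x ⟶ y) :
    (h.ι u x).hom ≫ h.act u f = f ≫ (h.ι u y).hom := by
  simp [act]

end MCat

namespace Minj

variable {U : Type*}

lemma injective (u : Minj U) : Function.Injective u := u.2

def mk (f : U → U) (hf : Function.Injective f) : Minj U := ⟨f, hf⟩

@[simp] lemma mk_apply (f : U → U) (hf : Function.Injective f) (a : U) : mk f hf a = f a := rfl

def ofPerm (U : Type*) : Equiv.Perm U →* Minj U where
  toFun π := mk π π.injective
  map_one' := rfl
  map_mul' _ _ := rfl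

@[simp] lemma ofPerm_apply (π : Equiv.Perm U) (a : U) : ofPerm U π a = π a := rfl

lemma isUnit_ofPerm (π : Equiv.Perm U) : IsUnit (ofPerm U π) := (Group.isUnit π).map _

lemma exists_perm_mul_eq_self (A : Finset U) (u : Minj U) :
    ∃ π : Equiv.Perm U, ∀ a ∈ A, (ofPerm U π * u) a = a := by
  obtain ⟨σ, hσ⟩ := Equiv.Perm.exists_extending_pair (fun a : A => (a : U)) (fun a => u a)
    Subtype.val_injective ((Minj.injective u).comp Subtype.val_injective)
  exact ⟨σ⁻¹, fun a ha => by simp [← hσ ⟨a, ha⟩]⟩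

/-- With `c` the doubling map, `s'` is the conjugate of `s` by `c` (the identity on odd
numbers) and `t` agrees with `c` on `A` but sends the rest of `ℕ` to odd numbers. -/
lemma exists_conj_fixing (A : Set ℕ) (s : Minj ℕ) (hs : ∀ a ∈ A, s a = a) :
    ∃ c t s' : Minj ℕ, (∀ a ∈ A, t a = c a) ∧ s' * t = t ∧ s' * c = c * s := by
  classical
  have hc : Function.Injective fun n : ℕ => 2 * n := fun m n hmn => by simpa using hmn
  have ht : Function.Injective fun n => if n ∈ A then 2 * n else 2 * n + 1 := by
    intro m n hmn
    by_cases hm : m ∈ A <;> by_cases hn : n ∈ A <;> simp only [hm, hn, if_true, if_false] at hmn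
      <;> omega
  have hs' : Function.Injective fun m => if m % 2 = 0 then 2 * s (m / 2) else m := by
    intro m n hmn
    by_cases hm : m % 2 = 0 <;> by_cases hn : n % 2 = 0 <;>
      simp only [hm, hn, if_true, if_false] at hmn
    · have := Minj.injective s (by simpa using hmn); omega
    all_goals omega
  refine ⟨mk _ hc, mk _ ht, mk _ hs', fun a ha => by simp [ha], DFunLike.ext _ _ fun n => ?_,
    DFunLike.ext _ _ fun n => by simp⟩
  by_cases hn : n ∈ A
  · simp [hn, hs n hn]
  · simp [hn]

end Minj

section Supported

variable {X : Type*}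

lemma Supported.smul_eq_of_eqOn {U : Type*} [MulAction (Minj U) X] {A : Finset U} {x : X}
    (hA : Supported (A : Set U) x) {u v : Minj U} (huv : ∀ a ∈ A, u a = v a) :
    u • x = v • x := by
  obtain ⟨π, hπ⟩ := Minj.exists_perm_mul_eq_self A u
  have hπv : ∀ a ∈ A, (Minj.ofPerm U π * v) a = a := fun a ha => by
    rw [Minj.mul_apply, ← huv a ha]; exact hπ a ha
  have := (hA _ hπ).trans (hA _ hπv).symm
  rwa [mul_smul, mul_smul, (Minj.isUnit_ofPerm π).smul_left_cancel] at this

variable [MulAction (Minj ℕ) X]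

/-- If `u` fixes `A ∩ B`, the injection `w` equal to `u` on `A` and to `n ↦ n + N` off `A`
(with `N` large) agrees with `u` on `A` and with an injection fixing `A` on `B`. -/
lemma Supported.inter {A B : Finset ℕ} {x : X} (hA : Supported (A : Set ℕ) x)
    (hB : Supported (B : Set ℕ) x) : Supported ((A ∩ B : Finset ℕ) : Set ℕ) x := by
  classical
  intro u hu
  obtain ⟨N, hN⟩ := (A ∪ A.image u).exists_nat_subset_range
  have hlt : ∀ a ∈ A, a < N ∧ u a < N := fun a ha =>
    ⟨Finset.mem_range.1 (hN (Finset.mem_union_left _ ha)),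
      Finset.mem_range.1 (hN (Finset.mem_union_right _ (Finset.mem_image_of_mem _ ha)))⟩
  have shift_injective : ∀ f : ℕ → ℕ, Set.InjOn f A → (∀ a ∈ A, f a < N) →
      Function.Injective ((A : Set ℕ).piecewise f (· + N)) := fun f hf hfN =>
    (Set.injective_piecewise_iff _).2 ⟨hf, fun _ _ _ _ => by simp, fun a ha b _ => by
      have := hfN a ha; omega⟩
  let v : Minj ℕ := Minj.mk _ (shift_injective id (Set.injOn_id _) fun a ha => (hlt a ha).1)
  let w : Minj ℕ :=
    Minj.mk _ (shift_injective u (Minj.injective u).injOn fun a ha => (hlt a ha).2)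
  calc u • x = w • x := hA.smul_eq_of_eqOn fun a ha => by simp [w, ha]
    _ = v • x := hB.smul_eq_of_eqOn fun b hb => by
        by_cases hbA : b ∈ A
        · simp [v, w, hbA, hu b (by simp [hbA, hb])]
        · simp [v, w, hbA]
    _ = x := hA v fun a ha => by simp [v, ha]

lemma FinSupported.exists_supported_subset_supp {x : X} (hx : FinSupported (U := ℕ) x) :
    ∃ A : Finset ℕ, Supported (A : Set ℕ) x ∧ ↑A ⊆ supp (U := ℕ) x := by
  obtain ⟨A, hA, hmin⟩ :=
    (measure Finset.card).wf.has_min {A : Finset ℕ | Supported (A : Set ℕ) x} hx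
  refine ⟨A, hA, fun a ha B hB => ?_⟩
  have hAB : A ∩ B = A := Finset.eq_of_subset_of_card_le Finset.inter_subset_left
    (not_lt.1 (hmin _ (hA.inter hB)))
  exact Finset.inter_subset_right (hAB.symm ▸ ha : a ∈ A ∩ B)

end Supported

namespace MCat

section

variable {U C : Type*} [Category C] [MulAction (Minj U) C] (h : MCat U C)

lemma ι_mul_eq_trans (u w : Minj U) (x : C) :
    h.ι (w * u) x = h.ι u x ≪≫ h.ι w (u • x) ≪≫ eqToIso (mul_smul w u x).symm := by
  ext
  rw [Iso.trans_hom, Iso.trans_hom, ← Category.assoc, h.ι_mul]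
  simp

lemma act_eqToHom (w : Minj U) {x y : C} (e : x = y) :
    h.act w (eqToHom e) = eqToHom (congrArg (w • ·) e) := by
  subst e
  simp

lemma act_injective (w : Minj U) {x y : C} : Function.Injective (h.act w : (x ⟶ y) → _) :=
  fun f g hfg => by simpa [act] using hfg

lemma act_eq_tw_comp_act_comp_tw (u v : Minj U) {x y : C} (f : x ⟶ y) :
    h.act u f = h.tw v u x ≫ h.act v f ≫ h.tw u v y := by
  simp [act, tw]

lemma tw_comp_tw (u v w : Minj U) (x : C) : h.tw v u x ≫ h.tw w v x = h.tw w u x := by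
  simp [tw]

lemma tw_mul_self (w u : Minj U) (x : C) :
    h.tw (w * u) u x = (h.ι w (u • x)).hom ≫ eqToHom (mul_smul w u x).symm := by
  simp [tw, ι_mul_eq_trans]

lemma tw_mul_left (w u v : Minj U) (x : C) :
    h.tw (w * v) (w * u) x =
      eqToHom (mul_smul w u x) ≫ h.act w (h.tw v u x) ≫ eqToHom (mul_smul w v x).symm := by
  simp [tw, act, ι_mul_eq_trans]

def TwTrivial (v u : Minj U) (x : C) : Prop :=
  ∃ e : u • x = v • x, h.tw v u x = eqToHom e

variable {h}

lemma twTrivial_self (u : Minj U) (x : C) : h.TwTrivial u u x :=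
  ⟨rfl, by simp [tw]⟩

lemma TwTrivial.symm {u v : Minj U} {x : C} (huv : h.TwTrivial v u x) : h.TwTrivial u v x := by
  obtain ⟨e, he⟩ := huv
  refine ⟨e.symm, ?_⟩
  have hcomp := h.tw_comp_tw v u v x
  rw [he, comp_eqToHom_iff] at hcomp
  simpa [tw] using hcomp

lemma TwTrivial.trans {u v w : Minj U} {x : C} (huv : h.TwTrivial v u x)
    (hvw : h.TwTrivial w v x) : h.TwTrivial w u x := by
  obtain ⟨e, he⟩ := huv
  obtain ⟨e', he'⟩ := hvw
  exact ⟨e.trans e', by rw [← h.tw_comp_tw, he, he', eqToHom_trans]⟩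

lemma twTrivial_mul_self_iff {w u : Minj U} {x : C} :
    h.TwTrivial (w * u) u x ↔
      ∃ e : u • x = w • u • x, (h.ι w (u • x)).hom = eqToHom e := by
  simp only [TwTrivial, tw_mul_self, comp_eqToHom_iff, eqToHom_trans]
  exact ⟨fun ⟨e, he⟩ => ⟨e.trans (mul_smul w u x), he⟩,
    fun ⟨e, he⟩ => ⟨e.trans (mul_smul w u x).symm, he⟩⟩

lemma TwTrivial.of_mul_left {w u v : Minj U} {x : C} (e : u • x = v • x)
    (huv : h.TwTrivial (w * v) (w * u) x) : h.TwTrivial v u x := by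
  obtain ⟨e', he'⟩ := huv
  refine ⟨e, h.act_injective w ?_⟩
  rw [tw_mul_left, eqToHom_comp_iff, comp_eqToHom_iff] at he'
  simp [he', act_eqToHom]

end

variable {C : Type*} [Category C] [MulAction (Minj ℕ) C] {h : MCat ℕ C}

/-- With `s' * c = c * s` and `s' * t = t`, where `t = c` on `A`: `ι s'` is trivial at
`t • x = c • x`, so `[c * s, c]^x` is trivial, and cancelling `c` gives `[s, 1]^x`. -/
lemma twTrivial_one_of_fixes {A : Finset ℕ} {x : C} (hA : Supported (A : Set ℕ) x)
    {s : Minj ℕ} (hs : ∀ a ∈ A, s a = a) : h.TwTrivial s 1 x := by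
  obtain ⟨c, t, s', htc, hst, hsc⟩ := Minj.exists_conj_fixing A s hs
  have hst' : h.TwTrivial (s' * t) t x := by
    rw [hst]
    exact twTrivial_self t x
  have hfix := twTrivial_mul_self_iff.1 hst'
  rw [hA.smul_eq_of_eqOn htc] at hfix
  have hcs : h.TwTrivial (c * s) (c * 1) x := by
    rw [mul_one, ← hsc]
    exact twTrivial_mul_self_iff.2 hfix
  exact hcs.of_mul_left ((one_smul _ x).trans (hA s hs).symm)

lemma twTrivial_of_eqOn {A : Finset ℕ} {x : C} (hA : Supported (A : Set ℕ) x)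
    {u v : Minj ℕ} (huv : ∀ a ∈ A, u a = v a) : h.TwTrivial v u x := by
  obtain ⟨π, hπ⟩ := Minj.exists_perm_mul_eq_self A u
  have hπv : ∀ a ∈ A, (Minj.ofPerm ℕ π * v) a = a := fun a ha => by
    rw [Minj.mul_apply, ← huv a ha]; exact hπ a ha
  exact ((twTrivial_one_of_fixes hA hπ).symm.trans
    (twTrivial_one_of_fixes hA hπv)).of_mul_left (hA.smul_eq_of_eqOn huv)

end MCat

/-- If `u` and `v` agree on `supp x ∪ supp y`, then `u • x = v • x`, `u • y = v • y`, and
`u_*(f) = v_*(f)` for every morphism `f : x ⟶ y`. -/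
theorem stmt15 (C : Type*) [Category C] [MulAction (Minj ℕ) C] (h : MCat ℕ C)
    {x y : C} (f : x ⟶ y) (hx : FinSupported (U := ℕ) x) (hy : FinSupported (U := ℕ) y)
    (u v : Minj ℕ) (huv : ∀ a ∈ supp (U := ℕ) x ∪ supp (U := ℕ) y, u a = v a) :
    ∃ (ex : u • x = v • x) (ey : u • y = v • y),
      h.act u f = eqToHom ex ≫ h.act v f ≫ eqToHom ey.symm := by
  obtain ⟨A, hA, hAx⟩ := hx.exists_supported_subset_supp
  obtain ⟨B, hB, hBy⟩ := hy.exists_supported_subset_supp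
  obtain ⟨ex, hex⟩ := MCat.twTrivial_of_eqOn (h := h) hA fun a ha => huv a (Or.inl (hAx ha))
  obtain ⟨ey, hey⟩ :=
    MCat.twTrivial_of_eqOn (h := h) hB fun b hb => (huv b (Or.inr (hBy hb))).symm
  exact ⟨ex, ey.symm, by rw [h.act_eq_tw_comp_act_comp_tw u v, hex, hey]⟩
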